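/- Let E ⊂ Q be a measurable subset of a cube Q ⊂ ℝ^n. Then there is a constant C = C(n) > 0, depending only on n, such that for any x, y ∈ Q there exists z ∈ Q with ℋ^1(\overline{xz} ∩ E) + ℋ^1(\overline{zy} ∩ E) ≤ C ℋ^n(E)^{1/n}. In particular, x and y can be joined by a curve in Q of length at most 2 diam(Q) whose intersection with E has ℋ^1-measure at most C ℋ^n(E)^{1/n}. -/

import Mathlib

open MeasureTheory Set ENNReal NNReal

noncomputable section

/-- A (nondegenerate) cube in `ℝⁿ` with edges parallel to the coordinate axes. -/
def IsCube {n : ℕ} (Q : Set (Fin n → ℝ)) : Prop :=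
  ∃ (a : Fin n → ℝ) (d : ℝ), 0 < d ∧ Q = Set.Icc a (fun i => a i + d)

/-!
Fix `x`. The part of `\overline{xz}` inside `E` has length `‖z - x‖` times the measure of the set
of times `t ∈ [0, 1]` with `x + t (z - x) ∈ E`. Integrating over `z ∈ Q` and exchanging the
integrals, the slice at time `t` is `Q` intersected with the preimage of `E` under the homothety of
ratio `t` about `x`, so its measure is at most `min (|Q|, t⁻ⁿ |E|)`. For `n ≥ 2` this integrates
to at most `2 |Q| (|E| / |Q|)^{1/n}`, so the mean over `z ∈ Q` of the two lengths is at most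
`4 diam Q (|E| / |Q|)^{1/n}`, and some `z` does no worse than the mean. In the sup metric of
`Fin n → ℝ` a cube has `diam Q = |Q|^{1/n}`. For `n = 1` the choice `z = x` works.
-/

open AffineMap Module

theorem lintegral_Ioi_mul_rpow_neg {p c : ℝ} (hp : 1 < p) (hc : 0 < c) {m : ℝ} (hm : 0 ≤ m) :
    ∫⁻ t in Ioi c, ENNReal.ofReal (m * t ^ (-p)) = ENNReal.ofReal (m * c ^ (1 - p) / (p - 1)) := by
  have hint : IntegrableOn (fun t : ℝ => m * t ^ (-p)) (Ioi c) :=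
    (integrableOn_Ioi_rpow_of_lt (by linarith) hc).const_mul m
  rw [← ofReal_integral_eq_lintegral_ofReal hint, integral_const_mul,
    integral_Ioi_rpow_of_lt (by linarith) hc]
  · rw [show -p + 1 = 1 - p by ring, ← neg_sub p 1, div_neg, neg_div, neg_neg, mul_div_assoc]
  · filter_upwards [ae_restrict_mem measurableSet_Ioi] with t ht
    have : 0 < t := hc.trans ht
    positivity

/-- Splitting at `t₀ = (m / V) ^ (1 / p)`, where the two bounds cross, both pieces contribute
`V * t₀` up to the factor `1 / (p - 1)`. -/
theorem lintegral_Icc_le_of_le_min {p V m : ℝ} (hp : 1 < p) (hV : 0 < V) (hm : 0 ≤ m)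
    {f : ℝ → ℝ≥0∞} (hfV : ∀ t ∈ Icc (0 : ℝ) 1, f t ≤ ENNReal.ofReal V)
    (hfm : ∀ t ∈ Ioc (0 : ℝ) 1, f t ≤ ENNReal.ofReal (m * t ^ (-p))) :
    ∫⁻ t in Icc (0 : ℝ) 1, f t ≤ ENNReal.ofReal (p / (p - 1) * V * (m / V) ^ (1 / p)) := by
  set t₀ := (m / V) ^ (1 / p) with ht₀_def
  have ht₀ : 0 ≤ t₀ := by positivity
  have hlow : ∫⁻ t in Icc 0 1 ∩ Iic t₀, f t ≤ ENNReal.ofReal (V * t₀) :=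
    calc ∫⁻ t in Icc 0 1 ∩ Iic t₀, f t
        ≤ ∫⁻ _ in Icc 0 1 ∩ Iic t₀, ENNReal.ofReal V :=
          setLIntegral_mono measurable_const fun t ht => hfV t ht.1
      _ ≤ ENNReal.ofReal V * volume (Icc 0 t₀) := by
          rw [setLIntegral_const]
          gcongr
          exact fun t ht => ⟨ht.1.1, ht.2⟩
      _ = ENNReal.ofReal (V * t₀) := by rw [Real.volume_Icc, sub_zero, ofReal_mul hV.le]
  have hhigh : ∫⁻ t in Icc 0 1 \ Iic t₀, f t ≤ ENNReal.ofReal (V * t₀ / (p - 1)) := by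
    have hmono : ∀ t ∈ Icc (0 : ℝ) 1 \ Iic t₀, f t ≤ ENNReal.ofReal (m * t ^ (-p)) :=
      fun t ht => hfm t ⟨ht₀.trans_lt (not_le.mp ht.2), ht.1.2⟩
    rcases hm.eq_or_lt with rfl | hm
    · calc ∫⁻ t in Icc 0 1 \ Iic t₀, f t ≤ ∫⁻ _ in Icc 0 1 \ Iic t₀, 0 :=
            setLIntegral_mono measurable_const fun t ht => by simpa using hmono t ht
        _ ≤ _ := by simp
    have ht₀_pos : 0 < t₀ := by positivity
    have hkey : m * t₀ ^ (1 - p) = V * t₀ := by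
      have hpow : t₀ ^ p = m / V := by
        rw [ht₀_def, one_div, Real.rpow_inv_rpow (by positivity) (by positivity : p ≠ 0)]
      rw [Real.rpow_sub ht₀_pos, Real.rpow_one, hpow]
      field_simp
    calc ∫⁻ t in Icc 0 1 \ Iic t₀, f t
        ≤ ∫⁻ t in Icc 0 1 \ Iic t₀, ENNReal.ofReal (m * t ^ (-p)) :=
          setLIntegral_mono (by fun_prop) hmono
      _ ≤ ∫⁻ t in Ioi t₀, ENNReal.ofReal (m * t ^ (-p)) :=
          lintegral_mono_set fun t ht => mem_Ioi.mpr (not_le.mp ht.2)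
      _ = ENNReal.ofReal (V * t₀ / (p - 1)) := by
          rw [lintegral_Ioi_mul_rpow_neg hp ht₀_pos hm.le, hkey]
  calc ∫⁻ t in Icc 0 1, f t
      = (∫⁻ t in Icc 0 1 ∩ Iic t₀, f t) + ∫⁻ t in Icc 0 1 \ Iic t₀, f t :=
        (lintegral_inter_add_sdiff f _ measurableSet_Iic).symm
    _ ≤ ENNReal.ofReal (V * t₀) + ENNReal.ofReal (V * t₀ / (p - 1)) := add_le_add hlow hhigh
    _ = ENNReal.ofReal (p / (p - 1) * V * t₀) := by
        have hp₁ : 0 < p - 1 := sub_pos.2 hp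
        rw [← ofReal_add (by positivity) (by positivity)]
        congr 1
        field_simp
        ring

section Segment

variable {F : Type*} [NormedAddCommGroup F] [NormedSpace ℝ F] [MeasurableSpace F] [BorelSpace F]

theorem hausdorffMeasure_segment_inter (x z : F) (E : Set F) :
    μH[1] (segment ℝ x z ∩ E) =
      edist x z * volume.restrict (Icc (0 : ℝ) 1) (lineMap x z ⁻¹' E) := by
  rw [segment_eq_image_lineMap, ← image_inter_preimage, hausdorffMeasure_lineMap_image,
    hausdorffMeasure_real, ENNReal.smul_def, edist_nndist, smul_eq_mul,
    Measure.restrict_apply' measurableSet_Icc, inter_comm]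

theorem measurableSet_lineMap_preimage {E : Set F} (hE : MeasurableSet E) (x : F) :
    MeasurableSet ((fun p : ℝ × F => lineMap x p.2 p.1) ⁻¹' E) :=
  (by fun_prop : Continuous fun p : ℝ × F => lineMap x p.2 p.1).measurable hE

theorem setLIntegral_lineMap_preimage_eq (μ : Measure F) [SFinite μ] {E : Set F}
    (hE : MeasurableSet E) (Q : Set F) (x : F) :
    ∫⁻ z in Q, volume.restrict (Icc (0 : ℝ) 1) (lineMap x z ⁻¹' E) ∂μ =
      ∫⁻ t in Icc (0 : ℝ) 1, μ (homothety x t ⁻¹' E ∩ Q) := by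
  have hW := measurableSet_lineMap_preimage hE x
  calc _ = ((volume.restrict (Icc (0 : ℝ) 1)).prod (μ.restrict Q)) _ :=
        (Measure.prod_apply_symm hW).symm
    _ = _ := by
      rw [Measure.prod_apply hW]
      refine lintegral_congr fun t => ?_
      rw [Measure.restrict_apply (hW.preimage measurable_prodMk_left)]
      rfl

variable [FiniteDimensional ℝ F] (μ : Measure F) [μ.IsAddHaarMeasure]

theorem MeasureTheory.Measure.addHaar_preimage_homothety (x : F) {t : ℝ} (ht : t ≠ 0)
    (s : Set F) :
    μ (homothety x t ⁻¹' s) = ENNReal.ofReal |(t ^ finrank ℝ F)⁻¹| * μ s := by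
  have hinv : Function.LeftInverse (homothety x t) (homothety x t⁻¹) := fun p => by
    rw [← homothety_mul_apply, mul_inv_cancel₀ ht, homothety_one, id_apply]
  have hinv' : Function.RightInverse (homothety x t) (homothety x t⁻¹) := fun p => by
    rw [← homothety_mul_apply, inv_mul_cancel₀ ht, homothety_one, id_apply]
  rw [← image_eq_preimage_of_inverse hinv hinv', Measure.addHaar_image_homothety, inv_pow]

theorem setLIntegral_lineMap_preimage_le (hF : 2 ≤ finrank ℝ F) {Q E : Set F}
    (hE : MeasurableSet E) (hQ₀ : μ Q ≠ 0) (hQ : μ Q ≠ ∞) (hE' : μ E ≠ ∞) (x : F) :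
    ∫⁻ z in Q, volume.restrict (Icc (0 : ℝ) 1) (lineMap x z ⁻¹' E) ∂μ ≤
      2 * μ Q * (μ E / μ Q) ^ (1 / finrank ℝ F : ℝ) := by
  set n := finrank ℝ F
  have hn : (2 : ℝ) ≤ n := by exact_mod_cast hF
  have hfV : ∀ t ∈ Icc (0 : ℝ) 1, μ (homothety x t ⁻¹' E ∩ Q) ≤ ENNReal.ofReal (μ Q).toReal :=
    fun t _ => (ofReal_toReal hQ).symm ▸ measure_mono inter_subset_right
  have hfm : ∀ t ∈ Ioc (0 : ℝ) 1, μ (homothety x t ⁻¹' E ∩ Q) ≤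
      ENNReal.ofReal ((μ E).toReal * t ^ (-(n : ℝ))) := fun t ht => by
    calc μ (homothety x t ⁻¹' E ∩ Q) ≤ μ (homothety x t ⁻¹' E) := measure_mono inter_subset_left
      _ = _ := by
        rw [Measure.addHaar_preimage_homothety μ x ht.1.ne', mul_comm, ofReal_mul toReal_nonneg,
          ofReal_toReal hE', Real.rpow_neg ht.1.le, Real.rpow_natCast,
          abs_of_pos (by have := ht.1; positivity)]
  have hint := lintegral_Icc_le_of_le_min (by linarith) (toReal_pos hQ₀ hQ) toReal_nonneg hfV hfm
  rw [setLIntegral_lineMap_preimage_eq μ hE Q x]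
  refine hint.trans ?_
  have hn₁ : 0 < (n : ℝ) - 1 := by linarith
  rw [ofReal_mul (by positivity), ofReal_mul (by positivity), ofReal_toReal hQ,
    ← ofReal_rpow_of_nonneg (by positivity) (by positivity), ← toReal_div,
    ofReal_toReal (div_ne_top hE' hQ₀)]
  gcongr
  rw [← ofReal_ofNat, ofReal_le_ofReal_iff zero_le_two, div_le_iff₀ hn₁]
  linarith

theorem exists_mem_hausdorffMeasure_segment_inter_add_le (hF : 2 ≤ finrank ℝ F) {Q E : Set F}
    (hE : MeasurableSet E) (hQ₀ : μ Q ≠ 0) (hQ : μ Q ≠ ∞) (hE' : μ E ≠ ∞) {x y : F}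
    (hx : x ∈ Q) (hy : y ∈ Q) :
    ∃ z ∈ Q, μH[1] (segment ℝ x z ∩ E) + μH[1] (segment ℝ z y ∩ E) ≤
      4 * Metric.ediam Q * (μ E / μ Q) ^ (1 / finrank ℝ F : ℝ) := by
  set r := (μ E / μ Q) ^ (1 / finrank ℝ F : ℝ)
  set T : F → F → ℝ≥0∞ := fun x z => volume.restrict (Icc (0 : ℝ) 1) (lineMap x z ⁻¹' E)
  have hT : ∀ x, Measurable (T x) := fun x =>
    measurable_measure_prodMk_right (measurableSet_lineMap_preimage hE x)
  obtain ⟨z, hz, hmean⟩ :=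
    exists_le_setLAverage hQ₀ hQ ((hT x).add (hT y)).aemeasurable (μ := μ)
  have hbound : ⨍⁻ z in Q, T x z + T y z ∂μ ≤ 4 * r := by
    rw [setLAverage_eq, lintegral_add_left (hT x)]
    refine div_le_of_le_mul' ?_
    calc _ ≤ 2 * μ Q * r + 2 * μ Q * r :=
          add_le_add (setLIntegral_lineMap_preimage_le μ hF hE hQ₀ hQ hE' x)
            (setLIntegral_lineMap_preimage_le μ hF hE hQ₀ hQ hE' y)
      _ = μ Q * (4 * r) := by ring
  refine ⟨z, hz, ?_⟩
  calc μH[1] (segment ℝ x z ∩ E) + μH[1] (segment ℝ z y ∩ E)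
      = edist x z * T x z + edist y z * T y z := by
        rw [segment_symm ℝ z y, hausdorffMeasure_segment_inter, hausdorffMeasure_segment_inter]
    _ ≤ Metric.ediam Q * (T x z + T y z) := by
        rw [mul_add]
        gcongr <;> exact Metric.edist_le_ediam_of_mem ‹_› hz
    _ ≤ Metric.ediam Q * (4 * r) := by gcongr; exact hmean.trans hbound
    _ = 4 * Metric.ediam Q * r := by ring

end Segment

theorem volume_pi_Icc_add_const {n : ℕ} {a : Fin n → ℝ} {d : ℝ} (hd : 0 ≤ d) :
    volume (Icc a fun i => a i + d) = ENNReal.ofReal (d ^ n) := by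
  simp [Real.volume_Icc_pi, ofReal_pow hd]

namespace IsCube

variable {n : ℕ} {Q : Set (Fin n → ℝ)}

theorem convex (hQ : IsCube Q) : Convex ℝ Q := by
  obtain ⟨a, d, -, rfl⟩ := hQ
  exact convex_Icc _ _

theorem isBounded (hQ : IsCube Q) : Bornology.IsBounded Q := by
  obtain ⟨a, d, -, rfl⟩ := hQ
  exact isCompact_Icc.isBounded

theorem volume_ne_zero (hQ : IsCube Q) : volume Q ≠ 0 := by
  obtain ⟨a, d, hd, rfl⟩ := hQ
  rw [volume_pi_Icc_add_const hd.le]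
  positivity

theorem volume_ne_top (hQ : IsCube Q) : volume Q ≠ ∞ := by
  obtain ⟨a, d, hd, rfl⟩ := hQ
  rw [volume_pi_Icc_add_const hd.le]
  exact ofReal_ne_top

theorem ediam_le_volume_rpow (hQ : IsCube Q) (hn : 0 < n) :
    Metric.ediam Q ≤ volume Q ^ (1 / n : ℝ) := by
  obtain ⟨a, d, hd, rfl⟩ := hQ
  rw [volume_pi_Icc_add_const hd.le, ofReal_rpow_of_nonneg (by positivity) (by positivity),
    ← Real.rpow_natCast, ← Real.rpow_mul hd.le, mul_one_div_cancel (by positivity),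
    Real.rpow_one, ← pi_univ_Icc]
  refine Metric.ediam_pi_le_of_le fun i => ?_
  rw [Real.ediam_Icc, add_sub_cancel_left]

theorem exists_mem_hausdorffMeasure_segment_inter_add_le (hQ : IsCube Q) (hn : 2 ≤ n)
    {E : Set (Fin n → ℝ)} (hEQ : E ⊆ Q) (hE : MeasurableSet E) {x y : Fin n → ℝ} (hx : x ∈ Q)
    (hy : y ∈ Q) :
    ∃ z ∈ Q, μH[1] (segment ℝ x z ∩ E) + μH[1] (segment ℝ z y ∩ E) ≤
      4 * volume E ^ (1 / n : ℝ) := by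
  obtain ⟨z, hz, h⟩ := _root_.exists_mem_hausdorffMeasure_segment_inter_add_le volume
    (by simpa using hn) hE hQ.volume_ne_zero hQ.volume_ne_top
    (ne_top_of_le_ne_top hQ.volume_ne_top (measure_mono hEQ)) hx hy
  refine ⟨z, hz, h.trans ?_⟩
  rw [finrank_fin_fun, div_rpow_of_nonneg _ _ (by positivity), mul_assoc]
  gcongr 4 * ?_
  calc _ ≤ volume Q ^ (1 / n : ℝ) * (volume E ^ (1 / n : ℝ) / volume Q ^ (1 / n : ℝ)) := by
        gcongr
        exact hQ.ediam_le_volume_rpow (by omega)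
    _ = _ := ENNReal.mul_div_cancel (by simp [hQ.volume_ne_zero]) (by simp [hQ.volume_ne_top])

end IsCube

/-- **Two-segment connection lemma.** There is a constant `C = C(n) > 0` such that for any cube
`Q ⊆ ℝⁿ`, any measurable `E ⊆ Q` and any `x, y ∈ Q` there is `z ∈ Q` with
`ℋ¹(\overline{xz} ∩ E) + ℋ¹(\overline{zy} ∩ E) ≤ C ℋⁿ(E)^{1/n}`.  In particular the curve
`\overline{xz} + \overline{zy}` joins `x` to `y` inside `Q`, has length at most `2 diam Q`, and
meets `E` in a set of `ℋ¹`-measure at most `C ℋⁿ(E)^{1/n}`. -/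
theorem exists_two_segment_path_avoiding (n : ℕ) (hn : 0 < n) :
    ∃ C : ℝ, 0 < C ∧ ∀ Q E : Set (Fin n → ℝ), IsCube Q → E ⊆ Q → MeasurableSet E →
      ∀ x ∈ Q, ∀ y ∈ Q, ∃ z ∈ Q,
        μH[(1 : ℝ)] (segment ℝ x z ∩ E) + μH[(1 : ℝ)] (segment ℝ z y ∩ E) ≤
            ENNReal.ofReal C * (μH[(n : ℝ)] E) ^ ((1 : ℝ) / n) ∧
        segment ℝ x z ∪ segment ℝ z y ⊆ Q ∧
        dist x z + dist z y ≤ 2 * Metric.diam Q := by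
  refine ⟨4, four_pos, fun Q E hQ hEQ hE x hx y hy => ?_⟩
  obtain ⟨z, hz, hseg⟩ : ∃ z ∈ Q, μH[1] (segment ℝ x z ∩ E) + μH[1] (segment ℝ z y ∩ E) ≤
      4 * (μH[(n : ℝ)] E) ^ ((1 : ℝ) / n) := by
    rcases (by omega : n = 1 ∨ 2 ≤ n) with rfl | hn₂
    · refine ⟨x, hx, ?_⟩
      have hxx : μH[1] (segment ℝ x x ∩ E) = 0 := measure_mono_null inter_subset_left
        (by rw [hausdorffMeasure_segment, edist_self])
      rw [hxx, zero_add, Nat.cast_one, div_one, ENNReal.rpow_one]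
      calc _ ≤ μH[1] E := measure_mono inter_subset_right
        _ ≤ 4 * μH[1] E := le_mul_of_one_le_left' (by norm_num)
    · have hvol : (μH[(n : ℝ)] : Measure (Fin n → ℝ)) = volume := by
        simpa using hausdorffMeasure_pi_real (ι := Fin n)
      rw [hvol]
      exact hQ.exists_mem_hausdorffMeasure_segment_inter_add_le hn₂ hEQ hE hx hy
  refine ⟨z, hz, by rwa [ofReal_ofNat],
    union_subset (hQ.convex.segment_subset hx hz) (hQ.convex.segment_subset hz hy), ?_⟩
  linarith [Metric.dist_le_diam_of_mem hQ.isBounded hx hz,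
    Metric.dist_le_diam_of_mem hQ.isBounded hz hy]
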